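/- If (G,f) is a P-filtered graph and e is a deletable edge, then H₀(G,f) ≅ H₀(G∖e, f) and H₁(G,f) ≅ H₁(G∖e, f) ⊕ P_{f(e)} as persistence modules, where P_{f(e)} is the indicator projective at grade f(e). -/

import Mathlib

structure Grph where
  V : Type
  E : Type
  [fintV : Fintype V]
  [fintE : Fintype E]
  [decV : DecidableEq V]
  [decE : DecidableEq E]
  bnd : E → V × V

attribute [instance] Grph.fintV Grph.fintE Grph.decV Grph.decE

/-- boundary map k⟨E⟩ → k⟨V⟩, e ↦ e₁ - e₀ -/
noncomputable def Grph.d (G : Grph) (k : Type) [Field k] :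
    (G.E →₀ k) →ₗ[k] (G.V →₀ k) :=
  Finsupp.linearCombination k fun e =>
    Finsupp.single (G.bnd e).2 1 - Finsupp.single (G.bnd e).1 1

def Grph.adj (G : Grph) (v w : G.V) : Prop :=
  ∃ e, G.bnd e = (v, w) ∨ G.bnd e = (w, v)

structure FGrph (P : Type) [PartialOrder P] extends Grph where
  fV : V → P
  fE : E → P
  mono0 : ∀ e, fV (bnd e).1 ≤ fE e
  mono1 : ∀ e, fV (bnd e).2 ≤ fE e

variable {P : Type} [PartialOrder P]

/-- boundary map of the sublevel graph at grade r -/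
noncomputable def FGrph.dr (G : FGrph P) (k : Type) [Field k] (r : P) :
    ({e : G.E // G.fE e ≤ r} →₀ k) →ₗ[k] ({v : G.V // G.fV v ≤ r} →₀ k) :=
  Finsupp.linearCombination k fun e =>
    Finsupp.single ⟨(G.bnd e.1).2, le_trans (G.mono1 e.1) e.2⟩ 1 -
    Finsupp.single ⟨(G.bnd e.1).1, le_trans (G.mono0 e.1) e.2⟩ 1

noncomputable def FGrph.vmap (G : FGrph P) (k : Type) [Field k] {r s : P} (h : r ≤ s) :
    ({v : G.V // G.fV v ≤ r} →₀ k) →ₗ[k] ({v : G.V // G.fV v ≤ s} →₀ k) :=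
  Finsupp.lmapDomain k k fun v => ⟨v.1, le_trans v.2 h⟩

noncomputable def FGrph.emap (G : FGrph P) (k : Type) [Field k] {r s : P} (h : r ≤ s) :
    ({e : G.E // G.fE e ≤ r} →₀ k) →ₗ[k] ({e : G.E // G.fE e ≤ s} →₀ k) :=
  Finsupp.lmapDomain k k fun e => ⟨e.1, le_trans e.2 h⟩

lemma FGrph.dNat (G : FGrph P) (k : Type) [Field k] {r s : P} (h : r ≤ s) :
    (G.dr k s).comp (G.emap k h) = (G.vmap k h).comp (G.dr k r) := by
  apply Finsupp.lhom_ext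
  intro e a
  show (G.dr k s) ((G.emap k h) (Finsupp.single e a)) =
    (G.vmap k h) ((G.dr k r) (Finsupp.single e a))
  rw [FGrph.emap, Finsupp.lmapDomain_apply, Finsupp.mapDomain_single, FGrph.dr,
    Finsupp.linearCombination_single, FGrph.dr, Finsupp.linearCombination_single,
    map_smul, map_sub, FGrph.vmap, Finsupp.lmapDomain_apply, Finsupp.lmapDomain_apply,
    Finsupp.mapDomain_single, Finsupp.mapDomain_single]

/-- 0-dim homology of the sublevel graph at r -/
noncomputable abbrev FGrph.H0at (G : FGrph P) (k : Type) [Field k] (r : P) :=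
  ({v : G.V // G.fV v ≤ r} →₀ k) ⧸ LinearMap.range (G.dr k r)

noncomputable def FGrph.H0map (G : FGrph P) (k : Type) [Field k] {r s : P} (h : r ≤ s) :
    G.H0at k r →ₗ[k] G.H0at k s :=
  Submodule.mapQ _ _ (G.vmap k h) (by
    rintro x ⟨y, rfl⟩
    exact ⟨G.emap k h y, by
      have := LinearMap.congr_fun (G.dNat k h) y
      simpa using this⟩)

noncomputable abbrev FGrph.H1at (G : FGrph P) (k : Type) [Field k] (r : P) :=
  LinearMap.ker (G.dr k r)

noncomputable def FGrph.H1map (G : FGrph P) (k : Type) [Field k] {r s : P} (h : r ≤ s) :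
    G.H1at k r →ₗ[k] G.H1at k s :=
  (G.emap k h).restrict (p := LinearMap.ker (G.dr k r)) (q := LinearMap.ker (G.dr k s))
    (by
      intro x hx
      have := LinearMap.congr_fun (G.dNat k h) x
      simp only [LinearMap.mem_ker] at hx ⊢
      simp only [LinearMap.coe_comp, Function.comp_apply] at this
      rw [this, hx, map_zero])

def FGrph.adjAt (G : FGrph P) (r : P) (a b : G.V) : Prop :=
  ∃ e, G.fE e ≤ r ∧ (G.bnd e = (a, b) ∨ G.bnd e = (b, a))

def FGrph.connAt (G : FGrph P) (r : P) : G.V → G.V → Prop :=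
  Relation.ReflTransGen (G.adjAt r)

def FGrph.pi0At (G : FGrph P) (r : P) :=
  Quot (fun a b : {v : G.V // G.fV v ≤ r} => G.adjAt r a.1 b.1)

def FGrph.Collapsible (G : FGrph P) (e : G.E) : Prop :=
  (G.bnd e).1 ≠ (G.bnd e).2 ∧
    (G.fE e = G.fV (G.bnd e).1 ∨ G.fE e = G.fV (G.bnd e).2)

def FGrph.delete (G : FGrph P) (e : G.E) : FGrph P where
  V := G.V
  E := {d : G.E // d ≠ e}
  bnd d := G.bnd d.1
  fV := G.fV
  fE d := G.fE d.1
  mono0 d := G.mono0 d.1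
  mono1 d := G.mono1 d.1

def FGrph.Deletable (G : FGrph P) (e : G.E) : Prop :=
  (G.delete e).connAt (G.fE e) (G.bnd e).1 (G.bnd e).2

def FGrph.collapse (G : FGrph P) (e : G.E) (x y : G.V) (hxy : y ≠ x)
    (hf : G.fV y ≤ G.fV x) : FGrph P where
  V := {v : G.V // v ≠ x}
  E := {d : G.E // d ≠ e}
  bnd d :=
    (if h : (G.bnd d.1).1 = x then ⟨y, hxy⟩ else ⟨(G.bnd d.1).1, h⟩,
     if h : (G.bnd d.1).2 = x then ⟨y, hxy⟩ else ⟨(G.bnd d.1).2, h⟩)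
  fV v := G.fV v.1
  fE d := G.fE d.1
  mono0 d := by
    dsimp only
    split
    · exact le_trans hf (by rw [← ‹(G.bnd d.1).1 = x›]; exact G.mono0 d.1)
    · exact G.mono0 d.1
  mono1 d := by
    dsimp only
    split
    · exact le_trans hf (by rw [← ‹(G.bnd d.1).2 = x›]; exact G.mono1 d.1)
    · exact G.mono1 d.1

/-- The indicator projective `P_{f(e)}` evaluated at `r`: it is (free on) a one-element
type when `f(e) ≤ r`, and the zero vector space otherwise. -/
noncomputable abbrev indAt (k : Type) [Field k] (G : FGrph P) (e : G.E) (r : P) :=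
  PLift (G.fE e ≤ r) →₀ k

noncomputable def indMap (k : Type) [Field k] (G : FGrph P) (e : G.E) {r s : P}
    (h : r ≤ s) : indAt k G e r →ₗ[k] indAt k G e s :=
  Finsupp.lmapDomain k k fun p => ⟨le_trans p.down h⟩

/-! If `e` is deletable, its endpoints are joined in `G ∖ e` at grade `f(e)`, so some 1-chain `c`
of `G ∖ e` at that grade has `∂c = ∂e`; pushed to any grade `r ≥ f(e)`, `c` shows that `G` and
`G ∖ e` have the same boundaries, hence the same `H₀`. Writing a 1-chain of `G` as a chain `y` of
`G ∖ e` plus `u • e`, and shearing `(y, u) ↦ (y + u • c, u)`, turns the boundary map of `G` into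
that of `G ∖ e` applied to the first coordinate; its kernel is `H₁(G ∖ e) × P_{f(e)}`, and every
map involved commutes with the structure maps. -/

section KernelOfProd

variable {R M N Q W : Type*} [Semiring R] [AddCommMonoid M] [AddCommMonoid N] [AddCommMonoid Q]
  [AddCommMonoid W] [Module R M] [Module R N] [Module R Q] [Module R W]

theorem LinearMap.range_eq_of_fst_equiv (φ : M ≃ₗ[R] N × Q) {f : M →ₗ[R] W} {g : N →ₗ[R] W}
    (h : ∀ x, g (φ x).1 = f x) : LinearMap.range f = LinearMap.range g := by
  apply le_antisymm
  · rintro _ ⟨x, rfl⟩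
    exact ⟨(φ x).1, h x⟩
  · rintro _ ⟨y, rfl⟩
    exact ⟨φ.symm (y, 0), by rw [← h, LinearEquiv.apply_symm_apply]⟩

def LinearEquiv.kerEquivProd (φ : M ≃ₗ[R] N × Q) {f : M →ₗ[R] W} {g : N →ₗ[R] W}
    (h : ∀ x, g (φ x).1 = f x) : LinearMap.ker f ≃ₗ[R] LinearMap.ker g × Q where
  toFun z := (⟨(φ z).1, by rw [LinearMap.mem_ker, h, LinearMap.mem_ker.mp z.2]⟩, (φ z).2)
  invFun p := ⟨φ.symm (p.1, p.2), by
    rw [LinearMap.mem_ker, ← h, LinearEquiv.apply_symm_apply, LinearMap.mem_ker.mp p.1.2]⟩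
  map_add' _ _ := by ext <;> simp
  map_smul' _ _ := by ext <;> simp
  left_inv z := by ext; simp
  right_inv p := by ext <;> simp

end KernelOfProd

namespace FGrph

variable (k : Type) [Field k]

abbrev C1at (G : FGrph P) (r : P) : Type := {d : G.E // G.fE d ≤ r} →₀ k

theorem sub_mem_range_dr_of_connAt (G : FGrph P) {r : P} {a b : G.V} (hab : G.connAt r a b)
    (ha : G.fV a ≤ r) (hb : G.fV b ≤ r) :
    (Finsupp.single ⟨b, hb⟩ 1 - Finsupp.single ⟨a, ha⟩ 1 : {v : G.V // G.fV v ≤ r} →₀ k) ∈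
      LinearMap.range (G.dr k r) := by
  induction hab with
  | refl => simp
  | @tail b c _ hbc ih =>
    obtain ⟨d, hd, hbnd⟩ := hbc
    have hb' : G.fV b ≤ r := by
      rcases hbnd with h | h
      · simpa [h] using (G.mono0 d).trans hd
      · simpa [h] using (G.mono1 d).trans hd
    have hstep : (Finsupp.single ⟨c, hb⟩ 1 - Finsupp.single ⟨b, hb'⟩ 1 :
        {v : G.V // G.fV v ≤ r} →₀ k) ∈ LinearMap.range (G.dr k r) := by
      rcases hbnd with h | h
      · exact ⟨Finsupp.single ⟨d, hd⟩ 1, by simp [FGrph.dr, h]⟩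
      · exact ⟨Finsupp.single ⟨d, hd⟩ (-1), by simp [FGrph.dr, h]⟩
    simpa using add_mem hstep (ih hb')

theorem exists_dr_delete_eq_of_deletable (G : FGrph P) {e : G.E}
    (he : G.Deletable e) :
    ∃ c, (G.delete e).dr k (G.fE e) c = G.dr k (G.fE e) (Finsupp.single ⟨e, le_rfl⟩ 1) := by
  obtain ⟨c, hc⟩ := (G.delete e).sub_mem_range_dr_of_connAt k he (G.mono0 e) (G.mono1 e)
  refine ⟨c, hc.trans ?_⟩
  simp [FGrph.dr]
  rfl

theorem dr_emap_apply (G : FGrph P) {r s : P} (h : r ≤ s) (x : G.C1at k r) :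
    G.dr k s (G.emap k h x) = G.vmap k h (G.dr k r x) :=
  LinearMap.congr_fun (G.dNat k h) x

theorem emap_emap (G : FGrph P) {r s t : P} (hrs : r ≤ s) (hst : s ≤ t) (x : G.C1at k r) :
    G.emap k hst (G.emap k hrs x) = G.emap k (hrs.trans hst) x := by
  simp only [FGrph.emap, Finsupp.lmapDomain_apply, ← Finsupp.mapDomain_comp]
  rfl

section Delete

variable (G : FGrph P) (e : G.E)

def sublevelEdgesEquiv (r : P) :
    {d : G.E // G.fE d ≤ r} ≃
      {d : (G.delete e).E // (G.delete e).fE d ≤ r} ⊕ PLift (G.fE e ≤ r) where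
  toFun d := if h : d.1 = e then .inr ⟨h ▸ d.2⟩ else .inl ⟨⟨d.1, h⟩, d.2⟩
  invFun := Sum.elim (fun d => ⟨d.1.1, d.2⟩) (fun p => ⟨e, p.down⟩)
  left_inv d := by
    by_cases h : d.1 = e
    · simp only [h, dite_true, Sum.elim_inr]
      exact Subtype.ext h.symm
    · simp [h]
  right_inv := by
    rintro (d | p)
    · simp [d.1.2]
      rfl
    · simp

noncomputable def chainsEquiv (r : P) : G.C1at k r ≃ₗ[k] (G.delete e).C1at k r × indAt k G e r :=
  (Finsupp.domLCongr (G.sublevelEdgesEquiv e r)).trans (Finsupp.sumFinsuppLEquivProdFinsupp k)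

theorem chainsEquiv_symm_inl {r : P} (d : {d : (G.delete e).E // (G.delete e).fE d ≤ r}) (a : k) :
    (G.chainsEquiv k e r).symm (Finsupp.single d a, 0) = Finsupp.single ⟨d.1.1, d.2⟩ a := by
  simp [chainsEquiv, sublevelEdgesEquiv]

theorem chainsEquiv_symm_inr {r : P} (p : PLift (G.fE e ≤ r)) (a : k) :
    (G.chainsEquiv k e r).symm (0, Finsupp.single p a) = Finsupp.single ⟨e, p.down⟩ a := by
  simp [chainsEquiv, sublevelEdgesEquiv]

theorem emap_chainsEquiv_symm {r s : P} (h : r ≤ s)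
    (x : (G.delete e).C1at k r × indAt k G e r) :
    G.emap k h ((G.chainsEquiv k e r).symm x) =
      (G.chainsEquiv k e s).symm (((G.delete e).emap k h).prodMap (indMap k G e h) x) := by
  suffices (G.emap k h).comp (G.chainsEquiv k e r).symm.toLinearMap =
      (G.chainsEquiv k e s).symm.toLinearMap.comp
        (((G.delete e).emap k h).prodMap (indMap k G e h)) from
    LinearMap.congr_fun this x
  refine LinearMap.prod_ext (Finsupp.lhom_ext fun d a => ?_) (Finsupp.lhom_ext fun p a => ?_)
  · simp [chainsEquiv_symm_inl, FGrph.emap]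
  · simp [chainsEquiv_symm_inr, FGrph.emap, indMap]

theorem chainsEquiv_emap {r s : P} (h : r ≤ s) (x : G.C1at k r) :
    G.chainsEquiv k e s (G.emap k h x) =
      ((G.delete e).emap k h).prodMap (indMap k G e h) (G.chainsEquiv k e r x) := by
  conv_lhs => rw [← (G.chainsEquiv k e r).symm_apply_apply x]
  rw [emap_chainsEquiv_symm, LinearEquiv.apply_symm_apply]

variable (c : (G.delete e).C1at k (G.fE e))

noncomputable def bypass (r : P) : indAt k G e r →ₗ[k] (G.delete e).C1at k r :=
  Finsupp.linearCombination k fun p => (G.delete e).emap k p.down c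

theorem dr_chainsEquiv_symm
    (hc : (G.delete e).dr k (G.fE e) c = G.dr k (G.fE e) (Finsupp.single ⟨e, le_rfl⟩ 1))
    (r : P) (x : (G.delete e).C1at k r × indAt k G e r) :
    G.dr k r ((G.chainsEquiv k e r).symm x) = (G.delete e).dr k r (x.1 + G.bypass k e c r x.2) := by
  suffices (G.dr k r).comp (G.chainsEquiv k e r).symm.toLinearMap =
      ((G.delete e).dr k r).comp
        (LinearMap.fst k _ _ + (G.bypass k e c r).comp (LinearMap.snd k _ _)) from
    LinearMap.congr_fun this x
  refine LinearMap.prod_ext (Finsupp.lhom_ext fun d a => ?_) (Finsupp.lhom_ext fun p a => ?_)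
  · change G.dr k r ((G.chainsEquiv k e r).symm (Finsupp.single d a, 0)) =
      (G.delete e).dr k r (Finsupp.single d a + G.bypass k e c r 0)
    rw [chainsEquiv_symm_inl, map_zero, add_zero]
    simp only [FGrph.dr, Finsupp.linearCombination_single]
    rfl
  · change G.dr k r ((G.chainsEquiv k e r).symm (0, Finsupp.single p a)) =
      (G.delete e).dr k r (0 + G.bypass k e c r (Finsupp.single p a))
    have he : Finsupp.single (⟨e, p.down⟩ : {d : G.E // G.fE d ≤ r}) a =
        a • G.emap k p.down (Finsupp.single ⟨e, le_rfl⟩ 1) := by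
      simp [FGrph.emap]
    rw [chainsEquiv_symm_inr, zero_add, bypass, Finsupp.linearCombination_single, map_smul,
      dr_emap_apply, hc, he, map_smul, dr_emap_apply]
    rfl

theorem bypass_indMap {r s : P} (h : r ≤ s) (u : indAt k G e r) :
    G.bypass k e c s (indMap k G e h u) = (G.delete e).emap k h (G.bypass k e c r u) := by
  induction u using Finsupp.induction_linear with
  | zero => simp
  | add u v hu hv => simp [hu, hv]
  | single p a => simp [bypass, indMap, emap_emap]

noncomputable def bypassEquiv (r : P) : G.C1at k r ≃ₗ[k] (G.delete e).C1at k r × indAt k G e r :=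
  (G.chainsEquiv k e r).trans <| (LinearEquiv.prodComm k _ _).trans <|
    ((LinearEquiv.refl k _).skewProd (LinearEquiv.refl k _) (G.bypass k e c r)).trans
      (LinearEquiv.prodComm k _ _)

theorem bypassEquiv_apply (r : P) (x : G.C1at k r) :
    G.bypassEquiv k e c r x =
      ((G.chainsEquiv k e r x).1 + G.bypass k e c r (G.chainsEquiv k e r x).2,
        (G.chainsEquiv k e r x).2) :=
  rfl

theorem dr_delete_bypassEquiv
    (hc : (G.delete e).dr k (G.fE e) c = G.dr k (G.fE e) (Finsupp.single ⟨e, le_rfl⟩ 1))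
    (r : P) (x : G.C1at k r) :
    (G.delete e).dr k r (G.bypassEquiv k e c r x).1 = G.dr k r x := by
  conv_rhs => rw [← (G.chainsEquiv k e r).symm_apply_apply x]
  rw [dr_chainsEquiv_symm k G e c hc, bypassEquiv_apply]

theorem bypassEquiv_emap {r s : P} (h : r ≤ s) (x : G.C1at k r) :
    G.bypassEquiv k e c s (G.emap k h x) =
      ((G.delete e).emap k h).prodMap (indMap k G e h) (G.bypassEquiv k e c r x) := by
  simp [bypassEquiv_apply, chainsEquiv_emap, bypass_indMap]

end Delete

end FGrph

theorem homology_of_delete_deletable (k : Type) [Field k] (G : FGrph P) (e : G.E)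
    (he : G.Deletable e) :
    (∃ ε0 : ∀ r : P, G.H0at k r ≃ₗ[k] (G.delete e).H0at k r,
      ∀ {r s : P} (h : r ≤ s) (z : G.H0at k r),
        ε0 s (G.H0map k h z) = (G.delete e).H0map k h (ε0 r z)) ∧
    (∃ ε1 : ∀ r : P, G.H1at k r ≃ₗ[k] ((G.delete e).H1at k r × indAt k G e r),
      ∀ {r s : P} (h : r ≤ s) (z : G.H1at k r),
        ε1 s (G.H1map k h z) =
          LinearMap.prodMap ((G.delete e).H1map k h) (indMap k G e h) (ε1 r z)) := by
  obtain ⟨c, hc⟩ := G.exists_dr_delete_eq_of_deletable k he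
  have hdr := G.dr_delete_bypassEquiv k e c hc
  refine ⟨⟨fun r => Submodule.quotEquivOfEq _ _ (LinearMap.range_eq_of_fst_equiv _ (hdr r)), ?_⟩,
    ⟨fun r => LinearEquiv.kerEquivProd _ (hdr r), ?_⟩⟩
  · intro r s h z
    obtain ⟨x, rfl⟩ := Submodule.Quotient.mk_surjective _ z
    -- `G ∖ e` has the vertices and `vmap` of `G`, and `quotEquivOfEq` fixes representatives
    rfl
  · intro r s h z
    have hnat := G.bypassEquiv_emap k e c h z.1
    exact Prod.ext (Subtype.ext (Prod.ext_iff.mp hnat).1) (Prod.ext_iff.mp hnat).2
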